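/- arXiv:1808.08906 — 3 statements merged into one kernel-verified Lean document; each statement's English description precedes it below -/
import Mathlib

section
/- For $k \in \mathbb{N}$, the number $I_n(k)$ of permutations of $[n]$ with exactly $k$ inversions satisfies $I_n(k) = \sum_{T \subseteq [n]} (-1)^{|T|} \binom{n - 1 + k - \omega(T)}{n-1}$, where $\omega(T) = \sum_{i \in T} i$ and $\binom{a}{b} := 0$ whenever $a < b$ or $b < 0$ or $a < 0$. -/
/-!
Deleting the largest value from the one-line notation of `θ ∈ S_{n+1}` leaves a permutation in
`S_n` and loses exactly `n - j` inversions, `j` being the position of that value; the pair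
(position, remaining permutation) determines `θ`. Hence `∑_θ X ^ inv θ = ∏_{i=1}^n (1 + ⋯ + X^{i-1})`,
that is `(1 - X)^n ∑_θ X ^ inv θ = ∏_{i=1}^n (1 - X^i)`. Expanding the product over subsets `T`
and multiplying by `(1 - X)^{-n} = ∑_k C(n-1+k, n-1) X^k` gives the formula on comparing the
coefficients of `X^k`.
-/

/-- The number of inversions of a permutation of `Fin n`. -/
def invPerm {n : ℕ} (θ : Equiv.Perm (Fin n)) : ℕ :=
  (Finset.univ.filter (fun p : Fin n × Fin n => p.1 < p.2 ∧ θ p.2 < θ p.1)).card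

/-- The binomial coefficient `C(a,b)` for `a : ℤ`, equal to `0` when `a < 0` or `a < b`. -/
def intChoose (a : ℤ) (b : ℕ) : ℤ := if 0 ≤ a then (a.toNat.choose b : ℤ) else 0

open Finset PowerSeries

namespace Equiv.Perm

variable {n : ℕ}

def inversionSet (θ : Perm (Fin n)) : Finset (Fin n × Fin n) :=
  {p | p.1 < p.2 ∧ θ p.2 < θ p.1}

theorem invPerm_eq_card_inversionSet (θ : Perm (Fin n)) : invPerm θ = #θ.inversionSet := rfl

variable (θ : Perm (Fin (n + 1)))

theorem apply_succAbove_symm_apply_last_ne_last (i : Fin n) :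
    θ ((θ⁻¹ (Fin.last n)).succAbove i) ≠ Fin.last n := fun h =>
  Fin.succAbove_ne _ i ((Equiv.eq_symm_apply θ).mpr h)

/-- Deleting the entry `n` from the one-line notation of `θ`: the position of `n` is skipped
and the remaining values are read in `Fin n`. -/
noncomputable def eraseLast : Perm (Fin n) :=
  Equiv.ofBijective
    (fun i => (θ ((θ⁻¹ (Fin.last n)).succAbove i)).castPred
      (θ.apply_succAbove_symm_apply_last_ne_last i))
    (Finite.injective_iff_bijective.mp fun _ _ h =>
      Fin.succAbove_right_injective (θ.injective (Fin.castPred_inj.mp h)))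

theorem eraseLast_lt_eraseLast_iff {a b : Fin n} :
    θ.eraseLast a < θ.eraseLast b ↔
      θ ((θ⁻¹ (Fin.last n)).succAbove a) < θ ((θ⁻¹ (Fin.last n)).succAbove b) :=
  Fin.castPred_lt_castPred_iff (hi := θ.apply_succAbove_symm_apply_last_ne_last a)
    (hj := θ.apply_succAbove_symm_apply_last_ne_last b)

theorem card_inversionSet_filter_fst_eq :
    #{p ∈ θ.inversionSet | p.1 = θ⁻¹ (Fin.last n)} = n - (θ⁻¹ (Fin.last n) : ℕ) := by
  set j := θ⁻¹ (Fin.last n)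
  have hj : θ j = Fin.last n := θ.apply_symm_apply _
  have : {p ∈ θ.inversionSet | p.1 = j} = (Ioi j).map ⟨(j, ·), Prod.mk_right_injective j⟩ := by
    ext ⟨a, b⟩
    simp only [inversionSet, mem_filter, mem_univ, true_and, mem_map, mem_Ioi,
      Function.Embedding.coeFn_mk, Prod.mk.injEq]
    constructor
    · rintro ⟨⟨hab, -⟩, rfl⟩
      exact ⟨b, hab, rfl, rfl⟩
    · rintro ⟨b, hjb, rfl, rfl⟩
      refine ⟨⟨hjb, hj ▸ Fin.lt_last_iff_ne_last.mpr fun h => hjb.ne' ?_⟩, rfl⟩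
      exact (Equiv.eq_symm_apply θ).mpr h
  rw [this, card_map, Fin.card_Ioi, Nat.add_sub_cancel]

theorem card_inversionSet_filter_fst_ne :
    #{p ∈ θ.inversionSet | p.1 ≠ θ⁻¹ (Fin.last n)} = #θ.eraseLast.inversionSet := by
  set j := θ⁻¹ (Fin.last n)
  have hj : θ j = Fin.last n := θ.apply_symm_apply _
  refine (card_bij (fun p _ => (j.succAbove p.1, j.succAbove p.2)) ?_ ?_ ?_).symm
  · rintro ⟨a, b⟩ hab
    simp only [inversionSet, mem_filter, mem_univ, true_and] at hab ⊢
    exact ⟨⟨Fin.succAbove_lt_succAbove_iff.mpr hab.1, (θ.eraseLast_lt_eraseLast_iff).mp hab.2⟩,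
      Fin.succAbove_ne j a⟩
  · rintro ⟨a, b⟩ - ⟨c, d⟩ - h
    simp only [Prod.mk.injEq] at h
    exact Prod.ext (Fin.succAbove_right_injective h.1) (Fin.succAbove_right_injective h.2)
  · rintro ⟨c, d⟩ hcd
    simp only [inversionSet, mem_filter, mem_univ, true_and] at hcd
    obtain ⟨⟨hlt, hinv⟩, hc⟩ := hcd
    have hd : d ≠ j := by
      rintro rfl
      exact (hj ▸ hinv).not_ge (Fin.le_last _)
    obtain ⟨a, rfl⟩ := Fin.exists_succAbove_eq hc
    obtain ⟨b, rfl⟩ := Fin.exists_succAbove_eq hd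
    refine ⟨(a, b), ?_, rfl⟩
    simp only [inversionSet, mem_filter, mem_univ, true_and]
    exact ⟨Fin.succAbove_lt_succAbove_iff.mp hlt, (θ.eraseLast_lt_eraseLast_iff).mpr hinv⟩

theorem invPerm_eq_add_invPerm_eraseLast :
    invPerm θ = (n - (θ⁻¹ (Fin.last n) : ℕ)) + invPerm θ.eraseLast := by
  rw [invPerm_eq_card_inversionSet, invPerm_eq_card_inversionSet,
    ← card_filter_add_card_filter_not (fun p => p.1 = θ⁻¹ (Fin.last n)),
    card_inversionSet_filter_fst_eq, card_inversionSet_filter_fst_ne]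

theorem bijective_symm_apply_last_eraseLast :
    Function.Bijective fun θ : Perm (Fin (n + 1)) => (θ⁻¹ (Fin.last n), θ.eraseLast) := by
  refine (Fintype.bijective_iff_injective_and_card _).mpr ⟨fun θ θ' h => ?_, ?_⟩
  · obtain ⟨hpos, herase⟩ := Prod.mk.inj h
    ext x
    rcases eq_or_ne x (θ⁻¹ (Fin.last n)) with rfl | hx
    · conv_rhs => rw [hpos]
      simp only [Perm.coe_inv, apply_symm_apply]
    · obtain ⟨i, rfl⟩ := Fin.exists_succAbove_eq hx
      have := congrArg Fin.val (DFunLike.congr_fun herase i)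
      simp only [Perm.eraseLast, ofBijective_apply, Fin.coe_castPred, ← hpos] at this
      exact this
  · simp [Fintype.card_perm, Nat.factorial_succ]

end Equiv.Perm

open Equiv

noncomputable def inversionSeries (n : ℕ) : ℤ⟦X⟧ :=
  ∑ θ : Perm (Fin n), X ^ invPerm θ

theorem coeff_inversionSeries (n k : ℕ) :
    coeff k (inversionSeries n) = #{θ : Perm (Fin n) | invPerm θ = k} := by
  simp [inversionSeries, coeff_X_pow, eq_comm]

theorem inversionSeries_zero : inversionSeries 0 = 1 := by
  simp [inversionSeries, invPerm]

theorem inversionSeries_succ (n : ℕ) :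
    inversionSeries (n + 1) = inversionSeries n * ∑ m ∈ range (n + 1), X ^ m := by
  rw [inversionSeries, Fintype.sum_bijective _ Perm.bijective_symm_apply_last_eraseLast _
    (fun p => X ^ ((n - (p.1 : ℕ)) + invPerm p.2)) fun θ => by
      rw [θ.invPerm_eq_add_invPerm_eraseLast]]
  simp_rw [Fintype.sum_prod_type, pow_add, ← mul_sum, ← sum_mul, inversionSeries]
  rw [mul_comm]
  congr 1
  rw [Fin.sum_univ_eq_sum_range (fun i => X ^ (n - i)), ← sum_range_reflect]
  refine sum_congr rfl fun m hm => ?_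
  rw [Nat.add_sub_cancel, Nat.sub_sub_self (Nat.lt_succ_iff.mp (mem_range.mp hm))]

theorem inversionSeries_mul_one_sub_X_pow (n : ℕ) :
    inversionSeries n * (1 - X) ^ n = ∏ i ∈ Icc 1 n, (1 - X ^ i) := by
  induction n with
  | zero => simp [inversionSeries_zero]
  | succ n ih =>
    rw [prod_Icc_succ_top (Nat.le_add_left 1 n), ← ih, inversionSeries_succ, pow_succ,
      ← geom_sum_mul_neg]
    ring

theorem inversionSeries_eq_prod_mul_invOneSubPow (n : ℕ) :
    inversionSeries n = (∏ i ∈ Icc 1 n, (1 - X ^ i)) * invOneSubPow ℤ n := by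
  rw [← inversionSeries_mul_one_sub_X_pow, mul_assoc, ← invOneSubPow_inv_eq_one_sub_pow,
    Units.inv_val, mul_one]

theorem prod_one_sub_pow_eq_sum_powerset {R : Type*} [CommRing R] (x : R) (s : Finset ℕ) :
    ∏ i ∈ s, (1 - x ^ i) = ∑ T ∈ s.powerset, (-1) ^ #T * x ^ ∑ i ∈ T, i := by
  simp_rw [sub_eq_add_neg, prod_one_add, prod_neg, prod_pow_eq_pow_sum _ (fun i => i)]

theorem intChoose_natCast (a b : ℕ) : intChoose a b = a.choose b := by
  simp [intChoose]

theorem intChoose_eq_zero_of_lt {a : ℤ} {b : ℕ} (h : a < b) : intChoose a b = 0 := by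
  unfold intChoose
  split_ifs with ha
  · rw [Nat.choose_eq_zero_of_lt (by omega), Nat.cast_zero]
  · rfl

theorem coeff_X_pow_mul_invOneSubPow {n : ℕ} (hn : 0 < n) (m k : ℕ) :
    coeff k (X ^ m * (invOneSubPow ℤ n).val) = intChoose ((n : ℤ) - 1 + k - m) (n - 1) := by
  rw [coeff_X_pow_mul', invOneSubPow_val_eq_mk_sub_one_add_choose_of_pos ℤ n hn, coeff_mk]
  split_ifs with h
  · rw [show (n : ℤ) - 1 + k - m = ((n - 1 + (k - m) : ℕ) : ℤ) by omega, intChoose_natCast]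
  · exact (intChoose_eq_zero_of_lt (by omega)).symm

theorem stmt_13 (n k : ℕ) (hn : 0 < n) :
    ((Finset.univ.filter (fun θ : Equiv.Perm (Fin n) => invPerm θ = k)).card : ℤ)
      = ∑ T ∈ (Finset.Icc 1 n).powerset,
          (-1 : ℤ) ^ T.card * intChoose ((n : ℤ) - 1 + k - ∑ i ∈ T, (i : ℤ)) (n - 1) := by
  rw [← coeff_inversionSeries, inversionSeries_eq_prod_mul_invOneSubPow,
    prod_one_sub_pow_eq_sum_powerset, sum_mul, map_sum]
  refine sum_congr rfl fun T _ => ?_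
  rw [mul_assoc, show (-1 : ℤ⟦X⟧) ^ #T = C ((-1) ^ #T) by simp, coeff_C_mul,
    coeff_X_pow_mul_invOneSubPow hn, Nat.cast_sum]
end

section
/- For $1 \le r \le n$, $\psi_n(r) = (-1)^s$ if $2r = s(3s \pm 1)$ for some $s \in \mathbb{N}$, and $\psi_n(r) = 0$ otherwise, where $\psi_n(r)$ is the coefficient of $t^r$ in $\prod_{i=1}^n (1-t^i)$. -/
/-!
Every factor `1 - t^i` with `i > n` is `1` modulo `t^{n+1}`, so for `r ≤ n` the coefficient of `t^r`
in `∏_{i=1}^n (1 - t^i)` agrees with that of `∏_{i ≥ 1} (1 - t^i)`, which Euler's pentagonal number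
theorem identifies with `∑_{k ∈ ℤ} (-1)^k t^{k(3k-1)/2}`.
-/

/-- `psi n r = ∑_{T ⊆ [n], ω(T) = r} (-1)^{|T|}` where `ω(T) = ∑_{i ∈ T} i`;
equivalently the coefficient of `t^r` in `∏_{i=1}^n (1 - t^i)`. -/
def psi (n : ℕ) (r : ℤ) : ℤ :=
  ∑ T ∈ (Finset.Icc 1 n).powerset.filter (fun T : Finset ℕ => (∑ i ∈ T, (i : ℤ)) = r),
    (-1 : ℤ) ^ T.card

open PowerSeries Finset

namespace PowerSeries

variable {R : Type*} [CommRing R]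

theorem prod_one_sub_X_pow_eq_sum_powerset (s : Finset ℕ) :
    ∏ i ∈ s, (1 - X ^ i : R⟦X⟧) = ∑ T ∈ s.powerset, (-1) ^ T.card * X ^ (∑ i ∈ T, i) := by
  simp_rw [sub_eq_neg_add, prod_add, prod_const_one, mul_one, Finset.prod_neg,
    Finset.prod_pow_eq_pow_sum _ (fun i => i)]

theorem coeff_prod_one_sub_X_pow_of_subset {s t : Finset ℕ} (hst : s ⊆ t) {r : ℕ}
    (ht : ∀ i ∈ t \ s, r ≤ i) :
    coeff r (∏ i ∈ t, (1 - X ^ (i + 1) : R⟦X⟧)) = coeff r (∏ i ∈ s, (1 - X ^ (i + 1) : R⟦X⟧)) := by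
  set I := Ideal.span {(X : R⟦X⟧) ^ (r + 1)}
  have hI : Ideal.Quotient.mk I (∏ i ∈ t \ s, (1 - X ^ (i + 1))) = 1 := by
    rw [map_prod]
    refine prod_eq_one fun i hi => ?_
    rw [map_sub, map_one, sub_eq_self, Ideal.Quotient.eq_zero_iff_mem, Ideal.mem_span_singleton]
    exact pow_dvd_pow X (by have := ht i hi; omega)
  obtain ⟨q, hq⟩ := Ideal.mem_span_singleton.mp (Ideal.Quotient.eq.mp (hI.trans (map_one _).symm))
  rw [← prod_sdiff hst, ← sub_add_cancel (∏ i ∈ t \ s, _) 1, hq, add_mul, one_mul, map_add,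
    mul_assoc, coeff_X_pow_mul', if_neg (by omega), zero_add]

end PowerSeries

theorem two_mul_pentagonal_natCast (s : ℕ) : 2 * pentagonal s = s * (3 * s - 1) := by
  rcases Nat.eq_zero_or_pos s with rfl | hs
  · rfl
  · zify [show 1 ≤ 3 * s by omega]
    exact two_mul_natCast_pentagonal s

theorem two_mul_pentagonal_neg_natCast (s : ℕ) : 2 * pentagonal (-s) = s * (3 * s + 1) := by
  zify
  exact two_mul_natCast_pentagonal_neg s

theorem coeff_pentagonalSeries_of_two_mul_eq {r s : ℕ}
    (h : 2 * r = s * (3 * s + 1) ∨ 2 * r = s * (3 * s - 1)) :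
    coeff r (pentagonalSeries ℤ) = (-1) ^ s := by
  obtain ⟨k, hk, rfl⟩ : ∃ k : ℤ, k.natAbs = s ∧ pentagonal k = r := by
    rcases h with h | h
    · exact ⟨-s, Int.natAbs_neg _, by have := two_mul_pentagonal_neg_natCast s; omega⟩
    · exact ⟨s, Int.natAbs_natCast _, by have := two_mul_pentagonal_natCast s; omega⟩
  rw [coeff_pentagonalSeries_pentagonal, Int.coe_negOnePow, hk]

theorem coeff_pentagonalSeries_of_forall_ne {r : ℕ}
    (h : ∀ s : ℕ, ¬(2 * r = s * (3 * s + 1) ∨ 2 * r = s * (3 * s - 1))) :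
    coeff r (pentagonalSeries ℤ) = 0 := by
  refine coeff_pentagonalSeries_eq_zero ℤ ?_
  rintro ⟨k, rfl⟩
  obtain ⟨s, rfl | rfl⟩ := Int.eq_nat_or_neg k
  · exact h s (Or.inr (two_mul_pentagonal_natCast s))
  · exact h s (Or.inl (two_mul_pentagonal_neg_natCast s))

theorem psi_eq_coeff_prod_one_sub_X_pow (n r : ℕ) :
    psi n r = coeff r (∏ i ∈ range n, (1 - X ^ (i + 1) : ℤ⟦X⟧)) := by
  rw [range_eq_Ico, prod_Ico_add' (fun i => (1 - X ^ i : ℤ⟦X⟧)), zero_add,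
    Ico_add_one_right_eq_Icc, prod_one_sub_X_pow_eq_sum_powerset, map_sum, psi, sum_filter]
  refine sum_congr rfl fun T _ => ?_
  rw [show ((-1) ^ T.card : ℤ⟦X⟧) = C ((-1) ^ T.card) by simp, coeff_C_mul_X_pow, ← Nat.cast_sum]
  simp only [Nat.cast_inj, eq_comm]

theorem psi_eq_coeff_pentagonalSeries {n r : ℕ} (h : r ≤ n) :
    psi n r = coeff r (pentagonalSeries ℤ) := by
  obtain ⟨s, hs⟩ := Filter.eventually_atTop.mp (coeff_prod_one_sub_X_pow_eventually_eq ℤ r)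
  rw [psi_eq_coeff_prod_one_sub_X_pow, ← hs (s ∪ range n) subset_union_left,
    coeff_prod_one_sub_X_pow_of_subset subset_union_right]
  intro i hi
  have := (mem_sdiff.mp hi).2
  rw [mem_range] at this
  omega

theorem stmt_17_general (n r : ℕ) (h2 : r ≤ n) :
    (∀ s : ℕ, (2 * r = s * (3 * s + 1) ∨ 2 * r = s * (3 * s - 1)) →
        psi n r = (-1 : ℤ) ^ s) ∧
    ((∀ s : ℕ, ¬(2 * r = s * (3 * s + 1) ∨ 2 * r = s * (3 * s - 1))) → psi n r = 0) := by
  rw [psi_eq_coeff_pentagonalSeries h2]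
  exact ⟨fun _ => coeff_pentagonalSeries_of_two_mul_eq, coeff_pentagonalSeries_of_forall_ne⟩

theorem stmt_17 (n r : ℕ) (h1 : 1 ≤ r) (h2 : r ≤ n) :
    (∀ s : ℕ, (2 * r = s * (3 * s + 1) ∨ 2 * r = s * (3 * s - 1)) →
        psi n r = (-1 : ℤ) ^ s) ∧
    ((∀ s : ℕ, ¬(2 * r = s * (3 * s + 1) ∨ 2 * r = s * (3 * s - 1))) → psi n r = 0) :=
  stmt_17_general n r h2
end

section
/- Let $d^*$ be a refinement of $d$ (every $d_i$ appears among the $d^*_j$), with both sequences strictly increasing in $[n-1]$. Then the inversion counts of the associated multiset permutations satisfy $I_n(d;k) \le I_n(d^*;k)$ for all $k \in \mathbb{N}$. -/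
/-- The number of inversions of a word `w`: pairs of positions `i < j` with `w j < w i`. -/
def invWord {n m : ℕ} (w : Fin n → Fin m) : ℕ :=
  (Finset.univ.filter (fun p : Fin n × Fin n => p.1 < p.2 ∧ w p.2 < w p.1)).card

/-- `lbl d i` is the (0-based) block label of position `i` for the block structure with
boundaries `d₁ < ⋯ < d_r`, i.e. the number of boundaries `≤ i`. -/
def lbl {n r : ℕ} (d : Fin r → ℕ) (i : Fin n) : Fin (r + 1) :=
  ⟨(Finset.univ.filter (fun m : Fin r => d m ≤ (i : ℕ))).card,
    Nat.lt_succ_of_le (le_trans (Finset.card_filter_le _ _) (by simp))⟩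

/-- `I n r d k`: the number of permutations of the multiset
`{1^{e₁}, …, (r+1)^{e_{r+1}}}` (where `eᵢ = dᵢ - d_{i-1}`, encoded as words that are
rearrangements of the label word of `d`) with exactly `k` inversions. -/
def Icount (n r : ℕ) (d : Fin r → ℕ) (k : ℕ) : ℕ :=
  (Finset.univ.filter (fun w : Fin n → Fin (r + 1) =>
    (∀ c, (Finset.univ.filter (fun j => w j = c)).card
        = (Finset.univ.filter (fun j : Fin n => lbl d j = c)).card) ∧
    invWord w = k)).card

/-!
Refine each word `w` counted by `I_n(d;k)` letter by letter: the positions carrying the letter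
`a` are relabelled, from left to right, by the `d*`-labels of the `a`-th block of `d`, read
from left to right. The result has the content of `d*`, collapsing the `d*`-labels by the
monotone map `φ` that sends a `d*`-block to the `d`-block containing it recovers `w`, and no
inversion is created or destroyed because the relabelling is weakly increasing inside each
letter class while `φ` is monotone.
-/

open Finset

theorem exists_equiv_comp_eq_strictMonoOn_fibers {ι α : Type*} [Fintype ι] [LinearOrder ι]
    [DecidableEq α] (w v : ι → α)
    (h : ∀ a, #{p | w p = a} = #{p | v p = a}) :
    ∃ σ : ι ≃ ι, (∀ p, v (σ p) = w p) ∧ ∀ p q, w p = w q → p < q → σ p < σ q := by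
  have hfib (a : α) : Fintype.card {p // w p = a} = Fintype.card {p // v p = a} := by
    simpa only [Fintype.card_subtype] using h a
  let e (a : α) : {p // w p = a} ≃o {p // v p = a} :=
    (Fintype.orderIsoFinOfCardEq _ (hfib a)).symm.trans (Fintype.orderIsoFinOfCardEq _ rfl)
  let σ : ι ≃ ι := Equiv.ofFiberEquiv fun a => (e a).toEquiv
  have hσ (a : α) (p : ι) (hp : w p = a) : σ p = (e a ⟨p, hp⟩).1 := by
    subst hp; rfl
  refine ⟨σ, Equiv.ofFiberEquiv_map _, fun p q hpq hlt => ?_⟩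
  rw [hσ (w p) p rfl, hσ (w p) q hpq.symm]
  exact (e (w p)).strictMono (Subtype.mk_lt_mk.mpr hlt)

theorem invWord_eq_of_monotone_comp {n m m' : ℕ} {u : Fin n → Fin m'} {w : Fin n → Fin m}
    {φ : Fin m' → Fin m} (hφ : Monotone φ) (huw : ∀ p, φ (u p) = w p)
    (hu : ∀ p q, w p = w q → p < q → u p ≤ u q) : invWord u = invWord w := by
  unfold invWord
  congr 1
  refine filter_congr fun ⟨p, q⟩ _ => and_congr_right fun hpq => ⟨fun h => ?_, fun h => ?_⟩
  · rw [← huw p, ← huw q]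
    refine (hφ h.le).lt_of_ne fun heq => (hu p q ?_ hpq).not_gt h
    rw [← huw p, ← huw q, heq]
  · rw [← huw p, ← huw q] at h
    exact hφ.reflect_lt h

theorem lbl_monotone {n r : ℕ} (d : Fin r → ℕ) : Monotone (lbl (n := n) d) :=
  fun _ _ hii' => Fin.mk_le_mk.mpr <| card_le_card fun m hm =>
    mem_filter.mpr ⟨mem_univ m, (mem_filter.mp hm).2.trans hii'⟩

theorem le_iff_lt_lbl {n s : ℕ} {d : Fin s → ℕ} (hd : Monotone d) (i : Fin n) (j : Fin s) :
    d j ≤ i ↔ (j : ℕ) < lbl d i := by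
  change _ ↔ (j : ℕ) < #{m | d m ≤ (i : ℕ)}
  constructor
  · intro h
    have hsub : Iic j ⊆ ({m | d m ≤ (i : ℕ)} : Finset (Fin s)) := fun m hm =>
      mem_filter.mpr ⟨mem_univ m, (hd (mem_Iic.mp hm)).trans h⟩
    simpa using card_le_card hsub
  · intro h
    by_contra hlt
    have hsub : ({m | d m ≤ (i : ℕ)} : Finset (Fin s)) ⊆ Iio j := fun m hm =>
      mem_Iio.mpr <| lt_of_not_ge fun hjm => hlt ((hd hjm).trans (mem_filter.mp hm).2)
    simpa using (card_le_card hsub).trans_lt' h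

theorem exists_monotone_comp_lbl_eq_lbl {n r s : ℕ} {d : Fin r → ℕ} {d' : Fin s → ℕ}
    (hd' : Monotone d') (href : ∀ i, ∃ j, d' j = d i) :
    ∃ φ : Fin (s + 1) → Fin (r + 1), Monotone φ ∧ ∀ i : Fin n, φ (lbl d' i) = lbl d i := by
  -- `φ c` counts the boundaries of `d` among the first `c` boundaries of `d'`.
  refine ⟨fun c => ⟨#{m | ∃ j : Fin s, (j : ℕ) < c ∧ d' j = d m},
    Nat.lt_succ_of_le ((card_filter_le _ _).trans_eq (card_fin r))⟩, fun c c' hcc' => ?_,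
    fun i => Fin.ext ?_⟩
  · refine Fin.mk_le_mk.mpr (card_le_card fun m hm => ?_)
    obtain ⟨j, hjc, hj⟩ := (mem_filter.mp hm).2
    exact mem_filter.mpr ⟨mem_univ m, j, hjc.trans_le hcc', hj⟩
  · change #{m | ∃ j : Fin s, (j : ℕ) < lbl d' i ∧ d' j = d m} = #{m | d m ≤ (i : ℕ)}
    refine congrArg card (filter_congr fun m _ => ?_)
    simp only [← le_iff_lt_lbl hd']
    constructor
    · rintro ⟨j, hji, hj⟩
      exact hj ▸ hji
    · intro hm
      obtain ⟨j, hj⟩ := href m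
      exact ⟨j, hj ▸ hm, hj⟩

theorem exists_refined_word {n r s : ℕ} {d : Fin r → ℕ} {d' : Fin s → ℕ}
    {φ : Fin (s + 1) → Fin (r + 1)} (hφ : Monotone φ)
    (hφlbl : ∀ i : Fin n, φ (lbl d' i) = lbl d i)
    {w : Fin n → Fin (r + 1)} (hw : ∀ c, #{j | w j = c} = #{j : Fin n | lbl d j = c}) :
    ∃ u : Fin n → Fin (s + 1), (∀ c, #{j | u j = c} = #{j : Fin n | lbl d' j = c}) ∧
      invWord u = invWord w ∧ φ ∘ u = w := by
  obtain ⟨σ, hσ, hσmono⟩ := exists_equiv_comp_eq_strictMonoOn_fibers w (lbl d) hw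
  have huw (p : Fin n) : φ (lbl d' (σ p)) = w p := by rw [hφlbl, hσ]
  refine ⟨lbl d' ∘ σ, fun c => card_equiv σ fun p => by simp, ?_, funext huw⟩
  exact invWord_eq_of_monotone_comp hφ huw
    fun p q hpq hlt => lbl_monotone d' (hσmono p q hpq hlt).le

theorem stmt_19_general (n r s : ℕ) (d : Fin r → ℕ) (d' : Fin s → ℕ)
    (hd' : StrictMono d')
    (href : ∀ i : Fin r, ∃ j : Fin s, d' j = d i) :
    ∀ k : ℕ, Icount n r d k ≤ Icount n s d' k := by
  intro k
  obtain ⟨φ, hφ, hφlbl⟩ := exists_monotone_comp_lbl_eq_lbl (n := n) hd'.monotone href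
  refine (card_le_card fun w hmem => ?_).trans (card_image_le (f := (φ ∘ ·)))
  obtain ⟨hw, rfl⟩ := (mem_filter.mp hmem).2
  obtain ⟨u, hu, hinv, rfl⟩ := exists_refined_word hφ hφlbl hw
  exact mem_image.mpr ⟨u, mem_filter.mpr ⟨mem_univ u, hu, hinv⟩, rfl⟩

/-- If `d*` refines `d`, then `I_n(d;k) ≤ I_n(d*;k)` for all `k`. -/
theorem stmt_19 (n r s : ℕ) (d : Fin r → ℕ) (d' : Fin s → ℕ)
    (hd : StrictMono d) (hd' : StrictMono d')
    (hdpos : ∀ i, 0 < d i) (hdlt : ∀ i, d i < n)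
    (hd'pos : ∀ i, 0 < d' i) (hd'lt : ∀ i, d' i < n)
    (href : ∀ i : Fin r, ∃ j : Fin s, d' j = d i) :
    ∀ k : ℕ, Icount n r d k ≤ Icount n s d' k :=
  stmt_19_general n r s d d' hd' href
end
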